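/- Let G = N ⋊ H be a split extension, with asynchronous combings L_N of N over X and L_H of H over Y (with constant K), and suppose that for all n ∈ N, y ∈ Y, every word in L_N representing n^y asynchronously K'-fellow travels with every 'image under y' of every word in L_N representing n. Then L_G = L_H L_N = {wv : w ∈ L_H, v ∈ L_N} is an asynchronous combing of G over X ∪ Y. If L_N and L_H are bijective, so is L_G. -/

import Mathlib

/-!
A word `w v` of `L_H L_N` represents `inr w̄ * inl v̄`. Right multiplication by a generator
`x ∈ X` only changes the `N`-part, so the `H`-parts coincide and the `N`-parts fellow travel in
`L_N`. Right multiplication by `y ∈ Y` replaces `w̄` by `w̄ y` and `v̄` by `(φ y)⁻¹ v̄`. Then `v`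
fellow travels an image under `y` of the new `N`-word `v'`, and that image, cut into blocks
of length at most `M` (there are finitely many generators), fellow travels `v'` read through
`φ y`, one block per letter. The remaining discrepancy in `N ⋊ H` is the single letter `y`,
because `inl (φ y n) * inr y = inr y * inl n`. Concatenating the reparametrizations of the
`H`-parts and of the `N`-parts gives the fellow travelling in `N ⋊ H`.
-/

/-- The group element represented by a word. -/
def evalW {X G : Type*} [Group G] (π : X → G) (w : List X) : G := (w.map π).prod

/-- The group element represented by the length-`t` prefix of a word. -/
def evalP {X G : Type*} [Group G] (π : X → G) (w : List X) (t : ℕ) : G :=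
  ((w.take t).map π).prod

/-- `g` and `h` are at word-metric distance at most `K` (w.r.t. the generators `π x`). -/
def WDistLE {X G : Type*} [Group G] (π : X → G) (K : ℕ) (g h : G) : Prop :=
  ∃ l : List X, l.length ≤ K ∧ g * (l.map π).prod = h

/-- `v` and `w` synchronously `K`-fellow travel. -/
def SyncFT {X G : Type*} [Group G] (π : X → G) (K : ℕ) (v w : List X) : Prop :=
  ∀ t : ℕ, WDistLE π K (evalP π v t) (evalP π w t)

/-- `v` and `w` asynchronously `K`-fellow travel, via a monotone reparametrization
mapping `[0, |v|]` onto `[0, |w|]`. -/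
def AsyncFT {X G : Type*} [Group G] (π : X → G) (K : ℕ) (v w : List X) : Prop :=
  ∃ h : ℕ → ℕ, Monotone h ∧ h 0 = 0 ∧ h v.length = w.length ∧
    ∀ t : ℕ, WDistLE π K (evalP π v t) (evalP π w (h t))

/-- The generating set is inverse-closed. -/
def InvClosed {X G : Type*} [Group G] (π : X → G) : Prop :=
  ∀ x, ∃ x', π x' = (π x)⁻¹

/-- `L` is a language for `G`: it contains a representative of every element. -/
def IsLanguageFor {X G : Type*} [Group G] (π : X → G) (L : Set (List X)) : Prop :=
  ∀ g : G, ∃ w ∈ L, evalW π w = g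

/-- `L` contains exactly one representative of every element. -/
def IsBijectiveLang {X G : Type*} [Group G] (π : X → G) (L : Set (List X)) : Prop :=
  ∀ g : G, ∃! w, w ∈ L ∧ evalW π w = g

/-- The pairs of words for which a combing requires fellow travelling:
`w` represents `v`, or `v` times a generator. -/
def CombRel {X G : Type*} [Group G] (π : X → G) (v w : List X) : Prop :=
  evalW π w = evalW π v ∨ ∃ x, evalW π w = evalW π v * π x

/-- `L` is a synchronous combing with fellow traveller constant `K`. -/
def IsSyncCombing {X G : Type*} [Group G] (π : X → G) (L : Set (List X)) (K : ℕ) : Prop :=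
  IsLanguageFor π L ∧ ∀ v ∈ L, ∀ w ∈ L, CombRel π v w → SyncFT π K v w

/-- `L` is an asynchronous combing with fellow traveller constant `K`. -/
def IsAsyncCombing {X G : Type*} [Group G] (π : X → G) (L : Set (List X)) (K : ℕ) : Prop :=
  IsLanguageFor π L ∧ ∀ v ∈ L, ∀ w ∈ L, CombRel π v w → AsyncFT π K v w

/-- `u` is an image of `v` under (the action of the generator) `y`: the concatenation of
words of `L_N` representing the images of the letters of `v`. -/
def IsImageUnder {X Y N H : Type*} [Group N] [Group H] [Inhabited X]
    (πN : X → N) (πH : Y → H) (φ : H →* MulAut N) (LN : Set (List X))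
    (y : Y) (v u : List X) : Prop :=
  ∃ ws : List (List X), ws.length = v.length ∧ u = ws.flatten ∧
    ∀ i : ℕ, i < v.length →
      ws.getD i [] ∈ LN ∧ evalW πN (ws.getD i []) = φ (πH y) (πN (v.getD i default))

open SemidirectProduct

section Words

variable {X G : Type*} [Group G] {π : X → G}

theorem evalP_of_length_le {w : List X} {t : ℕ} (h : w.length ≤ t) :
    evalP π w t = evalW π w := by
  simp [evalP, evalW, List.take_of_length_le h]

theorem evalP_append_of_le_length {a : List X} (b : List X) {t : ℕ} (h : t ≤ a.length) :
    evalP π (a ++ b) t = evalP π a t := by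
  simp [evalP, List.take_append_of_le_length h]

theorem evalP_append_length_add (a b : List X) (s : ℕ) :
    evalP π (a ++ b) (a.length + s) = evalW π a * evalP π b s := by
  simp [evalP, evalW, List.take_append, List.take_of_length_le]

namespace WDistLE

theorem refl (K : ℕ) (g : G) : WDistLE π K g g := ⟨[], by simp⟩

theorem mono {K K' : ℕ} (hK : K ≤ K') {g h : G} (hgh : WDistLE π K g h) : WDistLE π K' g h :=
  let ⟨l, hl, hp⟩ := hgh
  ⟨l, hl.trans hK, hp⟩

theorem trans {K₁ K₂ : ℕ} {a b c : G} (hab : WDistLE π K₁ a b) (hbc : WDistLE π K₂ b c) :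
    WDistLE π (K₁ + K₂) a c := by
  obtain ⟨l₁, hl₁, rfl⟩ := hab
  obtain ⟨l₂, hl₂, rfl⟩ := hbc
  exact ⟨l₁ ++ l₂, by simp; omega, by simp [mul_assoc]⟩

theorem mul_left {K : ℕ} {a b : G} (c : G) (hab : WDistLE π K a b) :
    WDistLE π K (c * a) (c * b) := by
  obtain ⟨l, hl, rfl⟩ := hab
  exact ⟨l, hl, by rw [mul_assoc]⟩

theorem map {X' G' : Type*} [Group G'] {π' : X' → G'} (ψ : G →* G') (f : X → X')
    (hf : ∀ x, π' (f x) = ψ (π x)) {K : ℕ} {a b : G} (hab : WDistLE π K a b) :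
    WDistLE π' K (ψ a) (ψ b) := by
  obtain ⟨l, hl, rfl⟩ := hab
  exact ⟨l.map f, by simpa using hl, by simp [map_list_prod, Function.comp_def, hf]⟩

end WDistLE

theorem wDistLE_evalP_evalW (w : List X) (t : ℕ) :
    WDistLE π w.length (evalP π w t) (evalW π w) :=
  ⟨w.drop t, by simp, by rw [evalP, evalW, ← List.prod_append, ← List.map_append,
    List.take_append_drop]⟩

theorem AsyncFT.eq_nil_of_nil {K : ℕ} {w : List X} (h : AsyncFT π K [] w) : w = [] := by
  obtain ⟨h, -, h0, hlen, -⟩ := h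
  exact List.eq_nil_of_length_eq_zero (by simpa [h0] using hlen.symm)

theorem AsyncFT.mono {K K' : ℕ} {v w : List X}
    (hK : K ≤ K') (h : AsyncFT π K v w) : AsyncFT π K' v w :=
  let ⟨h, hmono, h0, hlen, hdist⟩ := h
  ⟨h, hmono, h0, hlen, fun t => (hdist t).mono hK⟩

theorem IsAsyncCombing.eq_nil_of_evalW_eq_one {L : Set (List X)} {K : ℕ}
    (hL : IsAsyncCombing π L K) (hnil : [] ∈ L) {w : List X} (hw : w ∈ L)
    (hw1 : evalW π w = 1) : w = [] :=
  (hL.2 [] hnil w hw (Or.inl (by simpa [evalW] using hw1))).eq_nil_of_nil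

theorem IsLanguageFor.exists_bounded_reps {L : Set (List X)} (hL : IsLanguageFor π L)
    {ι : Type*} [Finite ι] (g : ι → G) :
    ∃ (r : ι → List X) (M : ℕ), ∀ i, r i ∈ L ∧ evalW π (r i) = g i ∧ (r i).length ≤ M := by
  choose r hr using fun i => hL (g i)
  obtain ⟨M, hM⟩ := Finite.exists_le fun i => (r i).length
  exact ⟨r, M, fun i => ⟨(hr i).1, (hr i).2, hM i⟩⟩

/-- Asynchronous fellow travelling of paths `γ`, `δ` of lengths `n`, `m`. Unlike `AsyncFT`, the
reparametrization need not fix `0`: it may skip an initial stretch of `δ` along which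
`δ` does not move. -/
def PathFT (π : X → G) (K : ℕ) (γ δ : ℕ → G) (n m : ℕ) : Prop :=
  ∃ h : ℕ → ℕ, Monotone h ∧ h n = m ∧ ∀ t, WDistLE π K (γ t) (δ (h t))

theorem AsyncFT.pathFT {K : ℕ} {v w : List X} (h : AsyncFT π K v w) :
    PathFT π K (evalP π v) (evalP π w) v.length w.length :=
  let ⟨h, hmono, _, hlen, hdist⟩ := h
  ⟨h, hmono, hlen, hdist⟩

theorem PathFT.asyncFT {K : ℕ} {v w : List X}
    (h : PathFT π K (evalP π v) (evalP π w) v.length w.length) (hnil : v = [] → w = []) :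
    AsyncFT π K v w := by
  obtain ⟨h, hmono, hlen, hdist⟩ := h
  refine ⟨fun t => if t = 0 then 0 else h t, fun a b hab => ?_, rfl, ?_, fun t => ?_⟩
  · dsimp only
    split_ifs <;> first | omega | exact hmono hab
  · dsimp only
    split_ifs with hv
    · simp [hnil (List.eq_nil_of_length_eq_zero hv)]
    · exact hlen
  · dsimp only
    split_ifs with ht
    · subst ht; exact WDistLE.refl K _
    · exact hdist t

namespace PathFT

variable {K : ℕ} {γ δ : ℕ → G} {n m : ℕ}

theorem imp {X' G' : Type*} [Group G'] {π' : X' → G'} {K' : ℕ} {γ' δ' : ℕ → G'}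
    (h : PathFT π K γ δ n m)
    (himp : ∀ t t', WDistLE π K (γ t) (δ t') → WDistLE π' K' (γ' t) (δ' t')) :
    PathFT π' K' γ' δ' n m :=
  let ⟨h, hmono, hlen, hdist⟩ := h
  ⟨h, hmono, hlen, fun t => himp _ _ (hdist t)⟩

theorem mono {K' : ℕ} (hK : K ≤ K') (h : PathFT π K γ δ n m) : PathFT π K' γ δ n m :=
  h.imp fun _ _ => WDistLE.mono hK

theorem trans {K₂ : ℕ} {ε : ℕ → G} {k : ℕ} (h₁ : PathFT π K γ δ n m)
    (h₂ : PathFT π K₂ δ ε m k) : PathFT π (K + K₂) γ ε n k := by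
  obtain ⟨h₁, hmono₁, hlen₁, hdist₁⟩ := h₁
  obtain ⟨h₂, hmono₂, hlen₂, hdist₂⟩ := h₂
  exact ⟨h₂ ∘ h₁, hmono₂.comp hmono₁, by simp [hlen₁, hlen₂],
    fun t => (hdist₁ t).trans (hdist₂ _)⟩

/-- The reparametrizations are glued at the first letter of `b`, not at the end of `a`, so that
the endpoint condition survives an empty `b`. -/
theorem append {X' G' : Type*} [Group G'] {π' : X' → G'} (g : G' →* G) {a b : List X}
    {a' b' : List X'}
    (h₁ : PathFT π K (evalP π a) (fun t => g (evalP π' a' t)) a.length a'.length)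
    (h₂ : PathFT π K (fun s => evalW π a * evalP π b s)
      (fun s => g (evalW π' a' * evalP π' b' s)) b.length b'.length) :
    PathFT π K (evalP π (a ++ b)) (fun t => g (evalP π' (a' ++ b') t))
      (a ++ b).length (a' ++ b').length := by
  obtain ⟨h₁, hmono₁, hlen₁, hdist₁⟩ := h₁
  obtain ⟨h₂, hmono₂, hlen₂, hdist₂⟩ := h₂
  have hle₁ : ∀ t ≤ a.length, h₁ t ≤ a'.length := fun t ht => hlen₁ ▸ hmono₁ ht
  refine ⟨fun t => if t < a.length then h₁ t else a'.length + h₂ (t - a.length),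
    fun s t hst => ?_, ?_, fun t => ?_⟩
  · dsimp only
    split_ifs with hs ht ht
    · exact hmono₁ hst
    · have := hle₁ s hs.le; omega
    · omega
    · have := hmono₂ (Nat.sub_le_sub_right hst a.length); omega
  · simp [hlen₂]
  · dsimp only
    split_ifs with ht
    · rw [evalP_append_of_le_length _ ht.le, evalP_append_of_le_length _ (hle₁ t ht.le)]
      exact hdist₁ t
    · obtain ⟨s, rfl⟩ := Nat.exists_eq_add_of_le (not_lt.mp ht)
      rw [evalP_append_length_add, evalP_append_length_add, Nat.add_sub_cancel_left]
      exact hdist₂ s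

end PathFT

/-- Each prefix of the substituted word is matched with the end of the block it lies in. -/
theorem pathFT_flatten_map {X' G' : Type*} [Group G'] {π' : X' → G'} (f : G' →* G)
    {r : X' → List X} {M : ℕ} (hr : ∀ x, evalW π (r x) = f (π' x))
    (hM : ∀ x, (r x).length ≤ M) (v : List X') :
    PathFT π M (evalP π (v.map r).flatten) (fun j => f (evalP π' v j))
      (v.map r).flatten.length v.length := by
  induction v with
  | nil =>
    refine ⟨fun _ => 0, monotone_const, rfl, fun t => ?_⟩
    simpa [evalP] using WDistLE.refl (π := π) M 1
  | cons x v ih =>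
    have hblock : PathFT π M (evalP π (r x)) (fun t => f (evalP π' [x] t)) (r x).length 1 :=
      ⟨fun _ => 1, monotone_const, rfl, fun t => by
        simpa [evalP, ← hr] using (wDistLE_evalP_evalW (r x) t).mono (hM x)⟩
    have hx : f (evalW π' [x]) = evalW π (r x) := by rw [hr]; simp [evalW]
    have hrest := ih.imp (π' := π) (γ' := fun s => evalW π (r x) * evalP π (v.map r).flatten s)
      (δ' := fun s => f (evalW π' [x] * evalP π' v s)) fun _ _ hd => by
        rw [map_mul, hx]
        exact hd.mul_left _
    exact PathFT.append f hblock hrest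

end Words

section SemidirectProduct

variable {X Y N H : Type*} [Group N] [Group H]

def sdpGen (φ : H →* MulAut N) (πN : X → N) (πH : Y → H) : X ⊕ Y → N ⋊[φ] H :=
  Sum.elim (fun x => inl (πN x)) (fun y => inr (πH y))

/-- The language `L_H L_N`. -/
def prodLang (LH : Set (List Y)) (LN : Set (List X)) : Set (List (X ⊕ Y)) :=
  {u | ∃ w ∈ LH, ∃ v ∈ LN, u = w.map Sum.inr ++ v.map Sum.inl}

variable {φ : H →* MulAut N} {πN : X → N} {πH : Y → H}

theorem inr_mul_inl_inj {a a' : H} {n n' : N} :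
    (inr a * inl n : N ⋊[φ] H) = inr a' * inl n' ↔ a = a' ∧ n = n' := by
  refine ⟨fun h => ?_, fun ⟨ha, hn⟩ => ha ▸ hn ▸ rfl⟩
  have hright := congrArg SemidirectProduct.right h
  have hleft := congrArg SemidirectProduct.left h
  simp only [mul_right, right_inr, right_inl, mul_one] at hright
  subst hright
  simpa using hleft

theorem inr_right_mul_inl (g : N ⋊[φ] H) : inr g.right * inl ((φ g.right)⁻¹ g.left) = g := by
  ext <;> simp

theorem inl_mul_inr (n : N) (h : H) :
    (inl n : N ⋊[φ] H) * inr h = inr h * inl ((φ h)⁻¹ n) := by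
  ext <;> simp

theorem evalW_sdpGen_map_inl (v : List X) :
    evalW (sdpGen φ πN πH) (v.map Sum.inl) = inl (evalW πN v) := by
  simp [evalW, map_list_prod, Function.comp_def, sdpGen]

theorem evalW_sdpGen_map_inr (w : List Y) :
    evalW (sdpGen φ πN πH) (w.map Sum.inr) = inr (evalW πH w) := by
  simp [evalW, map_list_prod, Function.comp_def, sdpGen]

theorem evalP_sdpGen_map_inl (v : List X) (t : ℕ) :
    evalP (sdpGen φ πN πH) (v.map Sum.inl) t = inl (evalP πN v t) := by
  rw [evalP, ← List.map_take, ← evalW, evalW_sdpGen_map_inl]; rfl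

theorem evalP_sdpGen_map_inr (w : List Y) (t : ℕ) :
    evalP (sdpGen φ πN πH) (w.map Sum.inr) t = inr (evalP πH w t) := by
  rw [evalP, ← List.map_take, ← evalW, evalW_sdpGen_map_inr]; rfl

theorem evalW_sdpGen_append (w : List Y) (v : List X) :
    evalW (sdpGen φ πN πH) (w.map Sum.inr ++ v.map Sum.inl) =
      inr (evalW πH w) * inl (evalW πN v) := by
  rw [evalW, List.map_append, List.prod_append, ← evalW, ← evalW, evalW_sdpGen_map_inr,
    evalW_sdpGen_map_inl]

theorem IsLanguageFor.prodLang {LN : Set (List X)} {LH : Set (List Y)}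
    (hLN : IsLanguageFor πN LN) (hLH : IsLanguageFor πH LH) :
    IsLanguageFor (sdpGen φ πN πH) (prodLang LH LN) := by
  intro g
  obtain ⟨w, hw, hwg⟩ := hLH g.right
  obtain ⟨v, hv, hvg⟩ := hLN ((φ g.right)⁻¹ g.left)
  exact ⟨_, ⟨w, hw, v, hv, rfl⟩, by rw [evalW_sdpGen_append, hwg, hvg, inr_right_mul_inl]⟩

theorem IsBijectiveLang.prodLang {LN : Set (List X)} {LH : Set (List Y)}
    (hLN : IsBijectiveLang πN LN) (hLH : IsBijectiveLang πH LH) :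
    IsBijectiveLang (sdpGen φ πN πH) (prodLang LH LN) := by
  intro g
  obtain ⟨w, ⟨hw, hwg⟩, hw_unique⟩ := hLH g.right
  obtain ⟨v, ⟨hv, hvg⟩, hv_unique⟩ := hLN ((φ g.right)⁻¹ g.left)
  refine ⟨_, ⟨⟨w, hw, v, hv, rfl⟩, by rw [evalW_sdpGen_append, hwg, hvg, inr_right_mul_inl]⟩, ?_⟩
  rintro _ ⟨⟨w', hw', v', hv', rfl⟩, hg⟩
  rw [evalW_sdpGen_append, ← inr_right_mul_inl g, inr_mul_inl_inj] at hg
  rw [hw_unique w' ⟨hw', hg.1⟩, hv_unique v' ⟨hv', hg.2⟩]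

theorem combRel_sdpGen {w w' : List Y} {v v' : List X}
    (hrel : CombRel (sdpGen φ πN πH) (w.map Sum.inr ++ v.map Sum.inl)
      (w'.map Sum.inr ++ v'.map Sum.inl)) :
    (evalW πH w' = evalW πH w ∧ CombRel πN v v') ∨
      ∃ y, evalW πH w' = evalW πH w * πH y ∧ evalW πN v = φ (πH y) (evalW πN v') := by
  simp only [CombRel, evalW_sdpGen_append] at hrel
  rcases hrel with h | ⟨x | y, h⟩
  · rw [inr_mul_inl_inj] at h
    exact Or.inl ⟨h.1, Or.inl h.2⟩
  · rw [sdpGen, Sum.elim_inl, mul_assoc, ← map_mul, inr_mul_inl_inj] at h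
    exact Or.inl ⟨h.1, Or.inr ⟨x, h.2⟩⟩
  · rw [sdpGen, Sum.elim_inr, mul_assoc, inl_mul_inr, ← mul_assoc, ← map_mul,
      inr_mul_inl_inj] at h
    exact Or.inr ⟨y, h.1, by simp [h.2]⟩

theorem WDistLE.inr_mul_inl {C : ℕ} {a b : N} (c : H) (h : WDistLE πN C a b) :
    WDistLE (sdpGen φ πN πH) C (inr c * inl a) (inr c * inl b) :=
  (WDistLE.map (inl : N →* N ⋊[φ] H) Sum.inl (fun _ => rfl) h).mul_left _

theorem WDistLE.inr_mul_inl_of_aut {C : ℕ} {a b : N} (c : H) (y : Y)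
    (h : WDistLE πN C a (φ (πH y) b)) :
    WDistLE (sdpGen φ πN πH) (C + 1) (inr c * inl a) (inr (c * πH y) * inl b) :=
  (h.inr_mul_inl c).trans ⟨[Sum.inr y], le_rfl, by simp [sdpGen, mul_assoc, inl_mul_inr]⟩

theorem isImageUnder_flatten_map [Inhabited X] {LN : Set (List X)} {y : Y} {r : X → List X}
    (hr : ∀ x, r x ∈ LN ∧ evalW πN (r x) = φ (πH y) (πN x)) (v : List X) :
    IsImageUnder πN πH φ LN y v (v.map r).flatten :=
  ⟨v.map r, by simp, rfl, fun i hi => by simpa [List.getD_eq_getElem, hi] using hr v[i]⟩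

end SemidirectProduct

section Combing

variable {X Y N H : Type*} [Group N] [Group H] {φ : H →* MulAut N} {πN : X → N} {πH : Y → H}
  {v v' : List X}

theorem AsyncFT.pathFT_sdpGen {K : ℕ} (c : H) (h : AsyncFT πN K v v') :
    PathFT (sdpGen φ πN πH) K (fun s => inr c * inl (evalP πN v s))
      (fun s => inr c * inl (evalP πN v' s)) v.length v'.length :=
  h.pathFT.imp fun _ _ hd => hd.inr_mul_inl c

/-- Chain the hypothesis on images with `pathFT_flatten_map`; the twist by `φ y` is then absorbed
by one extra letter `y`. -/
theorem AsyncFT.pathFT_sdpGen_of_image {K' M : ℕ} (c : H) (y : Y) {r : X → List X}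
    (hr : ∀ x, evalW πN (r x) = φ (πH y) (πN x)) (hM : ∀ x, (r x).length ≤ M)
    (h : AsyncFT πN K' v (v'.map r).flatten) :
    PathFT (sdpGen φ πN πH) (K' + M + 1) (fun s => inr c * inl (evalP πN v s))
      (fun s => inr (c * πH y) * inl (evalP πN v' s)) v.length v'.length :=
  (h.pathFT.trans (pathFT_flatten_map (φ (πH y)).toMonoidHom hr hM v')).imp
    fun _ _ hd => hd.inr_mul_inl_of_aut c y

theorem AsyncFT.sdpGen_append {K : ℕ} {w w' : List Y} (hH : AsyncFT πH K w w')
    (hN : PathFT (sdpGen φ πN πH) K (fun s => inr (evalW πH w) * inl (evalP πN v s))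
      (fun s => inr (evalW πH w') * inl (evalP πN v' s)) v.length v'.length)
    (hnil : v = [] → v' = []) :
    AsyncFT (sdpGen φ πN πH) K (w.map Sum.inr ++ v.map Sum.inl)
      (w'.map Sum.inr ++ v'.map Sum.inl) := by
  have hH' : PathFT (sdpGen φ πN πH) K (evalP (sdpGen φ πN πH) (w.map Sum.inr))
      (fun t => MonoidHom.id _ (evalP (sdpGen φ πN πH) (w'.map Sum.inr) t))
      (w.map (Sum.inr (α := X))).length (w'.map (Sum.inr (α := X))).length := by
    rw [List.length_map, List.length_map]
    refine hH.pathFT.imp fun t t' hd => ?_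
    simp only [evalP_sdpGen_map_inr, MonoidHom.id_apply]
    exact WDistLE.map (inr : H →* N ⋊[φ] H) Sum.inr (fun _ => rfl) hd
  have hN' : PathFT (sdpGen φ πN πH) K
      (fun s => evalW (sdpGen φ πN πH) (w.map Sum.inr) *
        evalP (sdpGen φ πN πH) (v.map Sum.inl) s)
      (fun s => MonoidHom.id _ (evalW (sdpGen φ πN πH) (w'.map Sum.inr) *
        evalP (sdpGen φ πN πH) (v'.map Sum.inl) s))
      (v.map (Sum.inl (β := Y))).length (v'.map (Sum.inl (β := Y))).length := by
    rw [List.length_map, List.length_map]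
    refine hN.imp fun t t' hd => ?_
    simpa only [evalW_sdpGen_map_inr, evalP_sdpGen_map_inl, MonoidHom.id_apply] using hd
  refine (PathFT.append (MonoidHom.id _) hH' hN').asyncFT ?_
  simp only [List.append_eq_nil_iff, List.map_eq_nil_iff, and_imp]
  rintro rfl rfl
  exact ⟨hH.eq_nil_of_nil, hnil rfl⟩

theorem asyncFT_sdpGen [Inhabited X] {LN : Set (List X)} {LH : Set (List Y)} {K K' M : ℕ}
    (hLN : IsAsyncCombing πN LN K) (hLH : IsAsyncCombing πH LH K)
    (hstar : ∀ (y : Y), ∀ v ∈ LN, ∀ v' ∈ LN,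
      evalW πN v' = φ (πH y) (evalW πN v) →
        ∀ u : List X, IsImageUnder πN πH φ LN y v u → AsyncFT πN K' v' u)
    {r : Y × X → List X}
    (hr : ∀ p, r p ∈ LN ∧ evalW πN (r p) = φ (πH p.1) (πN p.2) ∧ (r p).length ≤ M)
    {w w' : List Y} (hw : w ∈ LH) (hw' : w' ∈ LH)
    (hv : v ∈ LN) (hv' : v' ∈ LN)
    (hrel : CombRel (sdpGen φ πN πH) (w.map Sum.inr ++ v.map Sum.inl)
      (w'.map Sum.inr ++ v'.map Sum.inl)) :
    AsyncFT (sdpGen φ πN πH) (K + K' + M + 1) (w.map Sum.inr ++ v.map Sum.inl)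
      (w'.map Sum.inr ++ v'.map Sum.inl) := by
  obtain ⟨hcombH, hN, hnilN⟩ : CombRel πH w w' ∧
      PathFT (sdpGen φ πN πH) (K + K' + M + 1) (fun s => inr (evalW πH w) * inl (evalP πN v s))
        (fun s => inr (evalW πH w') * inl (evalP πN v' s)) v.length v'.length ∧
      (v = [] → v' = []) := by
    rcases combRel_sdpGen hrel with ⟨hw_eq, hcombN⟩ | ⟨y, hw_eq, hv_eq⟩
    · have hft := hLN.2 v hv v' hv' hcombN
      refine ⟨Or.inl hw_eq, ?_, ?_⟩
      · rw [hw_eq]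
        exact (hft.pathFT_sdpGen _).mono (by omega)
      · rintro rfl
        exact hft.eq_nil_of_nil
    · refine ⟨Or.inr ⟨y, hw_eq⟩, ?_, ?_⟩
      · have himage := isImageUnder_flatten_map (r := fun x => r (y, x))
          (fun x => ⟨(hr (y, x)).1, (hr (y, x)).2.1⟩) v'
        have hft := hstar y v' hv' v hv hv_eq _ himage
        rw [hw_eq]
        exact (hft.pathFT_sdpGen_of_image _ y (fun x => (hr (y, x)).2.1)
          (fun x => (hr (y, x)).2.2)).mono (by omega)
      · rintro rfl
        refine hLN.eq_nil_of_evalW_eq_one hv hv' ((φ (πH y)).injective ?_)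
        simpa [evalW] using hv_eq.symm
  exact ((hLH.2 w hw w' hw' hcombH).mono (by omega)).sdpGen_append hN hnilN

end Combing

theorem stmt15_general {X Y N H : Type*} [Group N] [Group H] [Fintype X] [Fintype Y] [Inhabited X]
    (φ : H →* MulAut N) (πN : X → N) (πH : Y → H)
    (LN : Set (List X)) (LH : Set (List Y)) (K K' : ℕ)
    (hLN : IsAsyncCombing πN LN K) (hLH : IsAsyncCombing πH LH K)
    (hstar : ∀ (y : Y), ∀ v ∈ LN, ∀ v' ∈ LN,
      evalW πN v' = φ (πH y) (evalW πN v) →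
        ∀ u : List X, IsImageUnder πN πH φ LN y v u → AsyncFT πN K' v' u) :
    ∃ K'' : ℕ,
      IsAsyncCombing
        (Sum.elim (fun x => (SemidirectProduct.inl (πN x) : N ⋊[φ] H))
          (fun y => SemidirectProduct.inr (πH y)))
        {u : List (X ⊕ Y) | ∃ w ∈ LH, ∃ v ∈ LN, u = w.map Sum.inr ++ v.map Sum.inl} K'' ∧
      (IsBijectiveLang πN LN → IsBijectiveLang πH LH →
        IsBijectiveLang
          (Sum.elim (fun x => (SemidirectProduct.inl (πN x) : N ⋊[φ] H))
            (fun y => SemidirectProduct.inr (πH y)))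
          {u : List (X ⊕ Y) | ∃ w ∈ LH, ∃ v ∈ LN, u = w.map Sum.inr ++ v.map Sum.inl}) := by
  obtain ⟨r, M, hr⟩ := hLN.1.exists_bounded_reps fun p : Y × X => φ (πH p.1) (πN p.2)
  refine ⟨K + K' + M + 1, ⟨hLN.1.prodLang hLH.1, ?_⟩, IsBijectiveLang.prodLang⟩
  rintro _ ⟨w, hw, v, hv, rfl⟩ _ ⟨w', hw', v', hv', rfl⟩ hrel
  exact asyncFT_sdpGen hLN hLH hstar hr hw hw' hv hv' hrel

/-- (Bridson's lemma) for a split extension `G = N ⋊ H` with asynchronous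
combings `L_N`, `L_H` of constant `K`, if every `L_N`-representative of `n^y`
asynchronously `K'`-fellow travels with every image under `y` of every
`L_N`-representative of `n`, then `L_H L_N` is an asynchronous combing of `G`,
bijective if `L_N` and `L_H` are. -/
theorem stmt15 {X Y N H : Type*} [Group N] [Group H] [Fintype X] [Fintype Y] [Inhabited X]
    (φ : H →* MulAut N) (πN : X → N) (πH : Y → H)
    (hinvN : InvClosed πN) (hinvH : InvClosed πH)
    (LN : Set (List X)) (LH : Set (List Y)) (K K' : ℕ)
    (hLN : IsAsyncCombing πN LN K) (hLH : IsAsyncCombing πH LH K)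
    (hstar : ∀ (y : Y), ∀ v ∈ LN, ∀ v' ∈ LN,
      evalW πN v' = φ (πH y) (evalW πN v) →
        ∀ u : List X, IsImageUnder πN πH φ LN y v u → AsyncFT πN K' v' u) :
    ∃ K'' : ℕ,
      IsAsyncCombing
        (Sum.elim (fun x => (SemidirectProduct.inl (πN x) : N ⋊[φ] H))
          (fun y => SemidirectProduct.inr (πH y)))
        {u : List (X ⊕ Y) | ∃ w ∈ LH, ∃ v ∈ LN, u = w.map Sum.inr ++ v.map Sum.inl} K'' ∧
      (IsBijectiveLang πN LN → IsBijectiveLang πH LH →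
        IsBijectiveLang
          (Sum.elim (fun x => (SemidirectProduct.inl (πN x) : N ⋊[φ] H))
            (fun y => SemidirectProduct.inr (πH y)))
          {u : List (X ⊕ Y) | ∃ w ∈ LH, ∃ v ∈ LN, u = w.map Sum.inr ++ v.map Sum.inl}) :=
  stmt15_general φ πN πH LN LH K K' hLN hLH hstar
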